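/- arXiv:1201.0615 — 2 statements merged into one kernel-verified Lean document; each statement's English description precedes it below -/
import Mathlib

section
/- Let p_n = (2/(ν+1))·((ν−1)/(ν+1))^n for n ∈ ℕ and ν > 1. Then the Shannon entropy −∑_{n=0}^∞ p_n ln p_n equals ((ν+1)/2)·ln(ν+1) − ((ν−1)/2)·ln(ν−1) − ln 2. -/
/-- The Shannon entropy of the ME packet eigenvalues
`p_n = (2/(ν+1))·((ν−1)/(ν+1))^n` equals
`((ν+1)/2)·ln(ν+1) − ((ν−1)/2)·ln(ν−1) − ln 2`. -/
theorem me_packet_entropy (ν : ℝ) (hν : 1 < ν) :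
    -(∑' n : ℕ, (2 / (ν + 1)) * ((ν - 1) / (ν + 1)) ^ n
        * Real.log ((2 / (ν + 1)) * ((ν - 1) / (ν + 1)) ^ n))
      = ((ν + 1) / 2) * Real.log (ν + 1)
        - ((ν - 1) / 2) * Real.log (ν - 1) - Real.log 2 := by
  have hν1 : (0:ℝ) < ν + 1 := by linarith
  have hν2 : (0:ℝ) < ν - 1 := by linarith
  set r : ℝ := (ν - 1) / (ν + 1) with hrdef
  set c : ℝ := 2 / (ν + 1) with hcdef
  have hr0 : 0 < r := div_pos hν2 hν1
  have hr1 : r < 1 := by rw [hrdef, div_lt_one hν1]; linarith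
  have hc0 : 0 < c := div_pos two_pos hν1
  have hrn : ‖r‖ < 1 := by rwa [Real.norm_eq_abs, abs_of_pos hr0]
  have hsum1 : Summable (fun n : ℕ => r ^ n) := summable_geometric_of_lt_one hr0.le hr1
  have hsum2 : Summable (fun n : ℕ => (n : ℝ) * r ^ n) :=
    (hasSum_coe_mul_geometric_of_norm_lt_one hrn).summable
  have key : ∀ n : ℕ, c * r ^ n * Real.log (c * r ^ n)
      = (c * Real.log c) * r ^ n + (c * Real.log r) * ((n : ℝ) * r ^ n) := by
    intro n
    rw [Real.log_mul (ne_of_gt hc0) (ne_of_gt (pow_pos hr0 n)), Real.log_pow]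
    ring
  rw [tsum_congr key, Summable.tsum_add (hsum1.mul_left _) (hsum2.mul_left _),
    tsum_mul_left, tsum_mul_left, tsum_geometric_of_lt_one hr0.le hr1,
    tsum_coe_mul_geometric_of_norm_lt_one hrn]
  have hc : c = 1 - r := by
    rw [hcdef, hrdef]; field_simp; norm_num
  have hlogc : Real.log c = Real.log 2 - Real.log (ν + 1) := by
    rw [hcdef, Real.log_div two_ne_zero (ne_of_gt hν1)]
  have hlogr : Real.log r = Real.log (ν - 1) - Real.log (ν + 1) := by
    rw [hrdef, Real.log_div (ne_of_gt hν2) (ne_of_gt hν1)]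
  rw [hlogc, hlogr, hc]
  have h1r : 1 - r = 2 / (ν + 1) := by rw [hrdef]; field_simp; norm_num
  rw [h1r]
  have hr' : r = (ν - 1) / (ν + 1) := hrdef
  rw [hr']
  field_simp
  ring
end

section
/- Combining the previous two results: if A is a bounded self-adjoint D-local operator, ψ, φ ∈ L²(ℝ³) orthonormal with φ vanishing a.e. on D, then ⟨Ψ, (A⊗1 + 1⊗A)Ψ⟩ = ⟨ψ, Aψ⟩ for Ψ = 2^{-1/2}(ψ⊗φ ± φ⊗ψ). -/
/-!
Since `φ` vanishes on `D`, locality gives `A φ = 0` and `A† φ = 0`, so every term of the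
expectation in which `A` meets `φ` on either side vanishes; only the two copies of
`⟨ψ, A ψ⟩ ‖φ‖²` survive.
-/

open MeasureTheory

noncomputable abbrev H3 : Type :=
  Lp ℂ 2 (volume : Measure (EuclideanSpace ℝ (Fin 3)))

section PairExpectation

variable {E : Type*} [NormedAddCommGroup E] [InnerProductSpace ℂ E]

/-- `⟨Ψ, (A ⊗ 1 + 1 ⊗ A) Ψ⟩` for `Ψ = 2^{-1/2}(ψ ⊗ φ + s φ ⊗ ψ)`, expanded with
`⟨a ⊗ b, c ⊗ d⟩ = ⟨a, c⟩⟨b, d⟩`. -/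
noncomputable def pairExpectation (A : E →L[ℂ] E) (ψ φ : E) (s : ℂ) : ℂ :=
  (1 / 2 : ℂ) *
    (((inner ℂ ψ (A ψ) : ℂ) * inner ℂ φ φ + s * (inner ℂ ψ (A φ) : ℂ) * inner ℂ φ ψ
        + s * (inner ℂ φ (A ψ) : ℂ) * inner ℂ ψ φ + (inner ℂ φ (A φ) : ℂ) * inner ℂ ψ ψ)
      + ((inner ℂ ψ ψ : ℂ) * inner ℂ φ (A φ) + s * (inner ℂ ψ φ : ℂ) * inner ℂ φ (A ψ)
        + s * (inner ℂ φ ψ : ℂ) * inner ℂ ψ (A φ) + (inner ℂ φ φ : ℂ) * inner ℂ ψ (A ψ)))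

theorem pairExpectation_eq_of_apply_eq_zero [CompleteSpace E] (A : E →L[ℂ] E) (ψ φ : E)
    (s : ℂ) (hφ : ‖φ‖ = 1) (hAφ : A φ = 0) (hAadjφ : ContinuousLinearMap.adjoint A φ = 0) :
    pairExpectation A ψ φ s = inner ℂ ψ (A ψ) := by
  have hφφ : (inner ℂ φ φ : ℂ) = 1 := by
    rw [inner_self_eq_norm_sq_to_K, hφ]; norm_num
  have hφAψ : (inner ℂ φ (A ψ) : ℂ) = 0 := by
    rw [← ContinuousLinearMap.adjoint_inner_left, hAadjφ, inner_zero_left]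
  simp only [pairExpectation, hAφ, hφAψ, hφφ, inner_zero_right]
  ring

end PairExpectation

theorem cluster_separability_operator_general
    (D : Set (EuclideanSpace ℝ (Fin 3)))
    (A : H3 →L[ℂ] H3)
    (hlocal : ∀ f : H3, (∀ᵐ x ∂(volume : Measure (EuclideanSpace ℝ (Fin 3))),
        x ∈ D → f x = 0) →
      A f = 0 ∧ (ContinuousLinearMap.adjoint A) f = 0)
    (ψ φ : H3) (hφ : ‖φ‖ = 1)
    (hφD : ∀ᵐ x ∂(volume : Measure (EuclideanSpace ℝ (Fin 3))), x ∈ D → φ x = 0)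
    (s : ℂ) :
    (1 / 2 : ℂ) *
      (((inner ℂ ψ (A ψ) : ℂ) * inner ℂ φ φ + s * (inner ℂ ψ (A φ) : ℂ) * inner ℂ φ ψ
          + s * (inner ℂ φ (A ψ) : ℂ) * inner ℂ ψ φ + (inner ℂ φ (A φ) : ℂ) * inner ℂ ψ ψ)
        + ((inner ℂ ψ ψ : ℂ) * inner ℂ φ (A φ) + s * (inner ℂ ψ φ : ℂ) * inner ℂ φ (A ψ)
          + s * (inner ℂ φ ψ : ℂ) * inner ℂ ψ (A φ) + (inner ℂ φ φ : ℂ) * inner ℂ ψ (A ψ)))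
      = (inner ℂ ψ (A ψ) : ℂ) := by
  obtain ⟨hAφ, hAadjφ⟩ := hlocal φ hφD
  exact pairExpectation_eq_of_apply_eq_zero A ψ φ s hφ hAφ hAadjφ

/-- Cluster separability: for a bounded self-adjoint `D`-local operator `A`
(`A` and `A*` annihilate all `L²` functions vanishing a.e. on the open set `D`),
orthonormal `ψ, φ` with `φ` vanishing a.e. on `D`, the expectation
`⟨Ψ, (A⊗1 + 1⊗A)Ψ⟩` (written out via the tensor-product inner product) in
`Ψ = 2^{-1/2}(ψ⊗φ ± φ⊗ψ)` equals `⟨ψ, Aψ⟩`. -/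
theorem cluster_separability_operator
    (D : Set (EuclideanSpace ℝ (Fin 3))) (hD : IsOpen D)
    (A : H3 →L[ℂ] H3) (hA : IsSelfAdjoint A)
    (hlocal : ∀ f : H3, (∀ᵐ x ∂(volume : Measure (EuclideanSpace ℝ (Fin 3))),
        x ∈ D → f x = 0) →
      A f = 0 ∧ (ContinuousLinearMap.adjoint A) f = 0)
    (ψ φ : H3) (hψ : ‖ψ‖ = 1) (hφ : ‖φ‖ = 1) (horth : (inner ℂ ψ φ : ℂ) = 0)
    (hφD : ∀ᵐ x ∂(volume : Measure (EuclideanSpace ℝ (Fin 3))), x ∈ D → φ x = 0)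
    (s : ℂ) (hs : s = 1 ∨ s = -1) :
    (1 / 2 : ℂ) *
      (((inner ℂ ψ (A ψ) : ℂ) * inner ℂ φ φ + s * (inner ℂ ψ (A φ) : ℂ) * inner ℂ φ ψ
          + s * (inner ℂ φ (A ψ) : ℂ) * inner ℂ ψ φ + (inner ℂ φ (A φ) : ℂ) * inner ℂ ψ ψ)
        + ((inner ℂ ψ ψ : ℂ) * inner ℂ φ (A φ) + s * (inner ℂ ψ φ : ℂ) * inner ℂ φ (A ψ)
          + s * (inner ℂ φ ψ : ℂ) * inner ℂ ψ (A φ) + (inner ℂ φ φ : ℂ) * inner ℂ ψ (A ψ)))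
      = (inner ℂ ψ (A ψ) : ℂ) :=
  cluster_separability_operator_general D A hlocal ψ φ hφ hφD s
end
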